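/- arXiv:2212.10139 — 3 statements merged into one kernel-verified Lean document; each statement's English description precedes it below -/
import Mathlib

section
/- For a mixed unitary qubit channel Φ(ρ) = Σ_j p_j U_j ρ U_j†, writing each U_j = cos(θ_j/2)·I + i·sin(θ_j/2)·(n_j · σ) with unit vectors n_j ∈ ℝ³, the operation fidelity at the pure state with Bloch vector b ∈ S² equals b^T S b, where S is the real symmetric 3×3 matrix S_{kl} = Σ_j p_j (cos²(θ_j/2) δ_{kl} + sin²(θ_j/2) (n_j)_k (n_j)_l). -/
open Matrix

/-!
Writing `ρ = |ψ⟩⟨ψ|`, the amplitude `⟨ψ|U|ψ⟩` is `tr (U ρ)`. Since the Pauli matrices are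
traceless with `tr (σₖ σₗ) = 2 δₖₗ`, this gives `⟨ψ|Uⱼ|ψ⟩ = cos (θⱼ/2) + i sin (θⱼ/2) (nⱼ · b)`,
whose squared modulus `cos² (θⱼ/2) + sin² (θⱼ/2) (nⱼ · b)²` is `bᵀ (cos² I + sin² nⱼ nⱼᵀ) b`
because `b` is a unit vector. Averaging over `j` gives `bᵀ S b`.
-/

theorem Matrix.dotProduct_mulVec_eq_trace_mul_vecMulVec {n R : Type*} [Fintype n]
    [CommSemiring R] (A : Matrix n n R) (u v : n → R) :
    v ⬝ᵥ (A *ᵥ u) = trace (A * vecMulVec u v) := by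
  rw [mul_vecMulVec, trace_vecMulVec, dotProduct_comm]

def pauli : Fin 3 → Matrix (Fin 2) (Fin 2) ℂ :=
  ![!![0, 1; 1, 0], !![0, -Complex.I; Complex.I, 0], !![1, 0; 0, -1]]

theorem trace_pauli_mul_pauli (k l : Fin 3) :
    trace (pauli k * pauli l) = if k = l then 2 else 0 := by
  fin_cases k <;> fin_cases l <;> simp [pauli, trace, Fin.sum_univ_two] <;> norm_num

theorem trace_pauli (k : Fin 3) : trace (pauli k) = 0 := by
  fin_cases k <;> simp [pauli, trace, Fin.sum_univ_two]

theorem trace_smul_one_add_pauli_mul_bloch (c d : ℂ) (a b : Fin 3 → ℂ) :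
    trace ((c • 1 + d • ∑ k, a k • pauli k) * ((1 / 2 : ℂ) • (1 + ∑ k, b k • pauli k)))
      = c + d * ∑ k, a k * b k := by
  simp only [one_div, smul_add, mul_add, Algebra.mul_smul_comm, mul_one, Finset.mul_sum, add_mul,
    Algebra.smul_mul_assoc, one_mul, Finset.sum_mul, trace_add, trace_smul, trace_one,
    Fintype.card_fin, Nat.cast_ofNat, smul_eq_mul, trace_sum, trace_pauli, mul_zero,
    Finset.sum_const_zero, add_zero, trace_pauli_mul_pauli, mul_ite, Finset.sum_ite_eq',
    Finset.mem_univ, ↓reduceIte, zero_add]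
  ring_nf
  exact congrArg (c + ·) (Finset.sum_congr rfl fun k _ => by ring)

theorem quadForm_scalar_add_outer_of_sum_sq_eq_one {ι : Type*} [Fintype ι] [DecidableEq ι]
    (b v : ι → ℝ) (hb : ∑ k, b k ^ 2 = 1) (c s : ℝ) :
    ∑ k, ∑ l, b k * (c * (if k = l then 1 else 0) + s * v k * v l) * b l
      = c + s * (∑ k, v k * b k) ^ 2 := by
  have hdiag : ∑ k, ∑ l, b k * (c * (if k = l then 1 else 0)) * b l = c := by
    calc _ = c * ∑ k, b k ^ 2 := by
          simp only [mul_ite, ite_mul, mul_one, mul_zero, zero_mul, Finset.sum_ite_eq,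
            Finset.mem_univ, if_true, Finset.mul_sum]
          exact Finset.sum_congr rfl fun k _ => by ring
      _ = c := by rw [hb, mul_one]
  have hrank1 : ∑ k, ∑ l, b k * (s * v k * v l) * b l = s * (∑ k, v k * b k) ^ 2 := by
    rw [sq, Finset.sum_mul_sum, Finset.mul_sum]
    exact Finset.sum_congr rfl fun k _ => by
      rw [Finset.mul_sum]; exact Finset.sum_congr rfl fun l _ => by ring
  simp only [mul_add, add_mul, Finset.sum_add_distrib, hdiag, hrank1]

theorem stmt6_general (m : ℕ) (p θ : Fin m → ℝ) (n : Fin m → Fin 3 → ℝ)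
    (σ : Fin 3 → Matrix (Fin 2) (Fin 2) ℂ)
    (hσ1 : σ 0 = !![0, 1; 1, 0])
    (hσ2 : σ 1 = !![0, -Complex.I; Complex.I, 0])
    (hσ3 : σ 2 = !![1, 0; 0, -1])
    (U : Fin m → Matrix (Fin 2) (Fin 2) ℂ)
    (hU : ∀ j, U j = (Real.cos (θ j / 2) : ℂ) • (1 : Matrix (Fin 2) (Fin 2) ℂ)
        + (Complex.I * Real.sin (θ j / 2)) • (∑ k, (n j k : ℂ) • σ k))
    (b : Fin 3 → ℝ) (hb : ∑ k, (b k) ^ 2 = 1)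
    (ψ : Fin 2 → ℂ)
    (hbloch : vecMulVec ψ (star ψ) =
      (1/2 : ℂ) • ((1 : Matrix (Fin 2) (Fin 2) ℂ) + ∑ k, (b k : ℂ) • σ k))
    (S : Matrix (Fin 3) (Fin 3) ℝ)
    (hS : ∀ k l, S k l = ∑ j, p j * ((Real.cos (θ j / 2)) ^ 2 * (if k = l then 1 else 0)
        + (Real.sin (θ j / 2)) ^ 2 * n j k * n j l)) :
    ∑ j, p j * ‖star ψ ⬝ᵥ (U j *ᵥ ψ)‖ ^ 2 = ∑ k, ∑ l, b k * S k l * b l := by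
  obtain rfl : σ = pauli := by
    funext k
    fin_cases k <;> assumption
  have hfidelity : ∀ j, ‖star ψ ⬝ᵥ (U j *ᵥ ψ)‖ ^ 2
      = Real.cos (θ j / 2) ^ 2 + Real.sin (θ j / 2) ^ 2 * (∑ k, n j k * b k) ^ 2 := by
    intro j
    have hamp : star ψ ⬝ᵥ (U j *ᵥ ψ)
        = Real.cos (θ j / 2) + (Real.sin (θ j / 2) * ∑ k, n j k * b k : ℝ) * Complex.I := by
      rw [dotProduct_mulVec_eq_trace_mul_vecMulVec, hbloch, hU,
        trace_smul_one_add_pauli_mul_bloch]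
      push_cast
      ring
    rw [hamp, Complex.sq_norm, Complex.normSq_add_mul_I, mul_pow]
  calc ∑ j, p j * ‖star ψ ⬝ᵥ (U j *ᵥ ψ)‖ ^ 2
      = ∑ j, p j * ∑ k, ∑ l, b k * (Real.cos (θ j / 2) ^ 2 * (if k = l then 1 else 0)
          + Real.sin (θ j / 2) ^ 2 * n j k * n j l) * b l := by
        simp only [hfidelity, quadForm_scalar_add_outer_of_sum_sq_eq_one b _ hb]
    _ = ∑ k, ∑ l, b k * S k l * b l := by
        simp only [hS, Finset.mul_sum, Finset.sum_mul]
        rw [Finset.sum_comm]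
        refine Finset.sum_congr rfl fun k _ => ?_
        rw [Finset.sum_comm]
        exact Finset.sum_congr rfl fun l _ => Finset.sum_congr rfl fun j _ => by ring

/-- For a mixed unitary qubit channel `Φ(ρ) = Σ_j p_j U_j ρ U_j†` with
`U_j = cos(θ_j/2) I + i sin(θ_j/2) (n_j·σ)`, the operation fidelity at the pure state
with Bloch vector `b` equals `bᵀ S b`, where
`S_{kl} = Σ_j p_j (cos²(θ_j/2) δ_{kl} + sin²(θ_j/2) (n_j)_k (n_j)_l)`. -/
theorem stmt6 (m : ℕ) (p θ : Fin m → ℝ) (n : Fin m → Fin 3 → ℝ)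
    (hp : ∀ j, 0 ≤ p j) (hpsum : ∑ j, p j = 1)
    (hn : ∀ j, ∑ k, (n j k) ^ 2 = 1)
    (σ : Fin 3 → Matrix (Fin 2) (Fin 2) ℂ)
    (hσ1 : σ 0 = !![0, 1; 1, 0])
    (hσ2 : σ 1 = !![0, -Complex.I; Complex.I, 0])
    (hσ3 : σ 2 = !![1, 0; 0, -1])
    (U : Fin m → Matrix (Fin 2) (Fin 2) ℂ)
    (hU : ∀ j, U j = (Real.cos (θ j / 2) : ℂ) • (1 : Matrix (Fin 2) (Fin 2) ℂ)
        + (Complex.I * Real.sin (θ j / 2)) • (∑ k, (n j k : ℂ) • σ k))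
    (b : Fin 3 → ℝ) (hb : ∑ k, (b k) ^ 2 = 1)
    (ψ : Fin 2 → ℂ) (hψ : star ψ ⬝ᵥ ψ = 1)
    (hbloch : vecMulVec ψ (star ψ) =
      (1/2 : ℂ) • ((1 : Matrix (Fin 2) (Fin 2) ℂ) + ∑ k, (b k : ℂ) • σ k))
    (S : Matrix (Fin 3) (Fin 3) ℝ)
    (hS : ∀ k l, S k l = ∑ j, p j * ((Real.cos (θ j / 2)) ^ 2 * (if k = l then 1 else 0)
        + (Real.sin (θ j / 2)) ^ 2 * n j k * n j l)) :
    ∑ j, p j * ‖star ψ ⬝ᵥ (U j *ᵥ ψ)‖ ^ 2 = ∑ k, ∑ l, b k * S k l * b l :=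
  stmt6_general m p θ n σ hσ1 hσ2 hσ3 U hU b hb ψ hbloch S hS
end

section
/- For d−1 commuting Hermitian d×d matrices H₁,…,H_{d−1}, the family {H₁,…,H_{d−1}, I_d} is linearly independent if and only if the joint numerical range W(H₁,…,H_{d−1}) ⊂ ℝ^{d−1} is a non-degenerate (d−1)-dimensional simplex (i.e., it is the convex hull of d affinely independent points). -/
/-!
Commuting Hermitian matrices are simultaneously unitarily diagonalizable,
`H i = U * diagonal (χ · i) * Uᴴ` with real joint eigenvalue points `χ a ∈ ℝ^d`. Conjugation by a
unitary does not change the joint numerical range, and for diagonal matrices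
`⟪ψ, H i ψ⟫ = ∑ a, |ψ a|² χ a i`, so `W` is the convex hull of the `d + 1` points `χ a`.
Conjugation by `U` is a real-linear injection, so `{1, H i}` is independent iff the columns
`1, χ · i` of the square matrix with rows `(1, χ a)` are independent, i.e. iff its rows are,
i.e. iff the points `χ a` are affinely independent. Finally, if `W` is also the hull of some
affinely independent `d + 1` points, the `χ a` span the same affine subspace `⊤`, so they are
affinely independent themselves.
-/

open Matrix Set

theorem convexHull_range_eq_image_stdSimplex {R E ι : Type*} [Field R] [LinearOrder R]
    [IsStrictOrderedRing R] [AddCommGroup E] [Module R E] [Fintype ι] (v : ι → E) :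
    convexHull R (range v) = (fun w => ∑ a, w a • v a) '' stdSimplex R ι := by
  classical
  have hL : ⇑(Fintype.linearCombination R v) = fun w => ∑ a, w a • v a :=
    funext (Fintype.linearCombination_apply R v)
  rw [← convexHull_basis_eq_stdSimplex, ← hL, LinearMap.image_convexHull, ← range_comp]
  congr 2
  ext a
  simp [Fintype.linearCombination_apply, ite_smul]

theorem affineIndependent_of_convexHull_range_eq {𝕜 E ι ι' : Type*} [Field 𝕜] [LinearOrder 𝕜]
    [IsStrictOrderedRing 𝕜] [AddCommGroup E] [Module 𝕜 E] [Fintype ι] [Fintype ι'] {n : ℕ}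
    {p : ι → E} {q : ι' → E} (hp : Fintype.card ι = n + 1) (hq : Fintype.card ι' = n + 1)
    (hqi : AffineIndependent 𝕜 q) (h : convexHull 𝕜 (range p) = convexHull 𝕜 (range q)) :
    AffineIndependent 𝕜 p := by
  have hspan : vectorSpan 𝕜 (range p) = vectorSpan 𝕜 (range q) := by
    rw [← direction_affineSpan, ← direction_affineSpan, ← affineSpan_convexHull, h,
      affineSpan_convexHull]
  rw [affineIndependent_iff_le_finrank_vectorSpan 𝕜 p hp, hspan]
  exact (affineIndependent_iff_le_finrank_vectorSpan 𝕜 q hq).mp hqi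

theorem linearIndependent_one_prod_iff_affineIndependent {k V ι : Type*} [Ring k]
    [AddCommGroup V] [Module k V] (p : ι → V) :
    LinearIndependent k (fun i => ((1 : k), p i)) ↔ AffineIndependent k p := by
  rw [linearIndependent_iff', affineIndependent_iff]
  refine forall₂_congr fun s g => ?_
  have hsum : ∑ i ∈ s, g i • ((1 : k), p i) = (∑ i ∈ s, g i, ∑ i ∈ s, g i • p i) := by
    simp [Prod.ext_iff, Prod.fst_sum, Prod.snd_sum]
  rw [hsum, Prod.mk_eq_zero, and_imp]

theorem linearIndependent_finCons_one_iff_affineIndependent {k : Type*} [Field k] {d : ℕ}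
    (p : Fin (d + 1) → Fin d → k) :
    LinearIndependent k (Fin.cons 1 fun i a => p a i : Fin (d + 1) → Fin (d + 1) → k) ↔
      AffineIndependent k p := by
  let N : Matrix (Fin (d + 1)) (Fin (d + 1)) k := of fun a => Fin.cons 1 (p a)
  have hcols : N.col = Fin.cons 1 fun i a => p a i := by
    ext j a; cases j using Fin.cases <;> rfl
  have hrows : N.row = Fin.consLinearEquiv k (fun _ => k) ∘ fun a => (1, p a) := by
    ext a j; cases j using Fin.cases <;> rfl
  rw [← hcols, linearIndependent_cols_iff_isUnit, ← linearIndependent_rows_iff_isUnit, hrows,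
    ← linearIndependent_one_prod_iff_affineIndependent]
  exact (Fin.consLinearEquiv k fun _ => k).toLinearMap.linearIndependent_iff (LinearEquiv.ker _)

theorem LinearMap.IsSymmetric.exists_orthonormalBasis_common_eigenvectors
    {𝕜 E ι : Type*} [RCLike 𝕜] [NormedAddCommGroup E] [InnerProductSpace 𝕜 E]
    [FiniteDimensional 𝕜 E] {T : ι → E →ₗ[𝕜] E} (hT : ∀ i, (T i).IsSymmetric)
    (hC : Pairwise fun i j => Commute (T i) (T j)) :
    ∃ (b : OrthonormalBasis (Fin (Module.finrank 𝕜 E)) 𝕜 E)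
      (χ : Fin (Module.finrank 𝕜 E) → ι → ℝ),
      ∀ a i, T i (b a) = (χ a i : 𝕜) • b a := by
  classical
  let V : (ι → 𝕜) → Submodule 𝕜 E := fun γ => ⨅ j, Module.End.eigenspace (T j) (γ j)
  have hV : DirectSum.IsInternal V := directSum_isInternal_of_pairwise_commute hT hC
  -- `subordinateOrthonormalBasis` needs a finite index type: keep the nonzero joint eigenspaces.
  have hVne : DirectSum.IsInternal fun γ : {γ // V γ ≠ ⊥} => V γ :=
    DirectSum.isInternal_ne_bot_iff.mpr hV
  have : Finite {γ // V γ ≠ ⊥} := WellFoundedGT.finite_ne_bot_of_iSupIndep hV.submodule_iSupIndep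
  have : Fintype {γ // V γ ≠ ⊥} := Fintype.ofFinite _
  have hVorth := (orthogonalFamily_iInf_eigenspaces hT).comp
    (Subtype.val_injective (p := fun γ => V γ ≠ ⊥))
  let b := hVne.subordinateOrthonormalBasis rfl hVorth
  let γ a := (hVne.subordinateOrthonormalBasisIndex rfl a hVorth).1
  have hb : ∀ a i, T i (b a) = γ a i • b a := fun a i =>
    Module.End.mem_eigenspace_iff.mp <|
      (Submodule.mem_iInf _).mp (hVne.subordinateOrthonormalBasis_subordinate rfl a hVorth) i
  refine ⟨b, fun a i => RCLike.re (γ a i), fun a i => ?_⟩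
  have hreal : (starRingEnd 𝕜) (γ a i) = γ a i := (hT i).conj_eigenvalue_eq_self <|
    Module.End.hasEigenvalue_of_hasEigenvector
      ⟨Module.End.mem_eigenspace_iff.mpr (hb a i), b.orthonormal.ne_zero a⟩
  rw [hb, RCLike.conj_eq_iff_re.mp hreal]

section Unitary

variable {𝕜 n ι : Type*} [RCLike 𝕜] [Fintype n]

theorem Matrix.IsHermitian.exists_unitary_diagonal_of_pairwise_commute
    [DecidableEq n] {H : ι → Matrix n n 𝕜}
    (hH : ∀ i, (H i).IsHermitian) (hC : Pairwise fun i j => Commute (H i) (H j)) :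
    ∃ U ∈ unitaryGroup n 𝕜, ∃ χ : n → ι → ℝ,
      ∀ i, H i = U * diagonal (fun a => (χ a i : 𝕜)) * star U := by
  obtain ⟨b₀, χ₀, hb₀⟩ := LinearMap.IsSymmetric.exists_orthonormalBasis_common_eigenvectors
    (T := fun i => toEuclideanLin (H i)) (fun i => isSymmetric_toEuclideanLin_iff.mpr (hH i))
    (fun i j hij => (hC hij).map (toLpLinAlgEquiv 2))
  let e : Fin (Module.finrank 𝕜 (EuclideanSpace 𝕜 n)) ≃ n := Fintype.equivOfCardEq (by simp)
  let b := b₀.reindex e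
  let U := (EuclideanSpace.basisFun n 𝕜).toBasis.toMatrix b.toBasis
  have hU : U ∈ unitaryGroup n 𝕜 :=
    (EuclideanSpace.basisFun n 𝕜).toMatrix_orthonormalBasis_mem_unitary b
  refine ⟨U, hU, χ₀ ∘ e.symm, fun i => ?_⟩
  have hHU : H i * U = U * diagonal (fun a => ((χ₀ ∘ e.symm) a i : 𝕜)) := by
    ext j a
    have heig := congrFun (congrArg WithLp.ofLp (hb₀ (e.symm a) i)) j
    have hUa (k : n) : U k a = b₀ (e.symm a) k := by simp [U, b, Module.Basis.toMatrix_apply]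
    calc (H i * U) j a
        _ = (H i *ᵥ b₀ (e.symm a)) j := by simp only [mul_apply, mulVec, dotProduct, hUa]
        _ = _ := heig
        _ = (U * diagonal fun a => ((χ₀ ∘ e.symm) a i : 𝕜)) j a := by
          simp [hUa, mul_diagonal, RCLike.real_smul_eq_coe_mul, mul_comm]
  rw [← hHU, mul_assoc, mem_unitaryGroup_iff.mp hU, mul_one]

theorem linearIndependent_unitary_conj_diagonal_iff [DecidableEq n] {U : Matrix n n 𝕜}
    (hU : U ∈ unitaryGroup n 𝕜) {κ : Type*} (f : κ → n → ℝ) :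
    LinearIndependent ℝ (fun k => U * diagonal (fun a => (f k a : 𝕜)) * star U) ↔
      LinearIndependent ℝ f := by
  let Φ : (n → ℝ) →ₗ[ℝ] Matrix n n 𝕜 := LinearMap.mulRight ℝ (star U) ∘ₗ LinearMap.mulLeft ℝ U ∘ₗ
    diagonalLinearMap n ℝ 𝕜 ∘ₗ (Algebra.linearMap ℝ 𝕜).compLeft n
  refine Φ.linearIndependent_iff (LinearMap.ker_eq_bot'.mpr fun g hg => ?_)
  have hΦ : Φ g = U * diagonal (fun a => (g a : 𝕜)) * star U := rfl
  have hdiag : diagonal (fun a => (g a : 𝕜)) = 0 :=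
    calc diagonal (fun a => (g a : 𝕜))
        _ = star U * U * diagonal (fun a => (g a : 𝕜)) * (star U * U) := by
          rw [mem_unitaryGroup_iff'.mp hU, one_mul, mul_one]
        _ = star U * Φ g * U := by simp only [hΦ, mul_assoc]
        _ = 0 := by rw [hg, mul_zero, zero_mul]
  ext a
  simpa using congrFun₂ hdiag a a

def jointNumericalRange (A : ι → Matrix n n 𝕜) : Set (ι → ℝ) :=
  {x | ∃ ψ : n → 𝕜, star ψ ⬝ᵥ ψ = 1 ∧ ∀ i, x i = RCLike.re (star ψ ⬝ᵥ (A i *ᵥ ψ))}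

theorem image_norm_sq_eq_stdSimplex :
    (fun (ψ : n → 𝕜) a => ‖ψ a‖ ^ 2) '' {ψ | ∑ a, ‖ψ a‖ ^ 2 = 1} = stdSimplex ℝ n := by
  ext w
  constructor
  · rintro ⟨ψ, hψ, rfl⟩
    exact ⟨fun a => by positivity, hψ⟩
  · rintro ⟨hw₀, hw₁⟩
    have hsq : ∀ a, ‖((√(w a) : ℝ) : 𝕜)‖ ^ 2 = w a := fun a => by
      rw [RCLike.norm_ofReal, sq_abs, Real.sq_sqrt (hw₀ a)]
    exact ⟨fun a => (√(w a) : 𝕜), by simp only [mem_ofPred_eq, hsq]; exact hw₁, funext hsq⟩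

theorem star_dotProduct_diagonal_mulVec [DecidableEq n] (c : n → ℝ) (ψ : n → 𝕜) :
    star ψ ⬝ᵥ (diagonal (fun a => (c a : 𝕜)) *ᵥ ψ) = ((∑ a, ‖ψ a‖ ^ 2 * c a : ℝ) : 𝕜) := by
  simp only [dotProduct, mulVec_diagonal, Pi.star_apply, RCLike.star_def, RCLike.ofReal_sum,
    RCLike.ofReal_mul, RCLike.ofReal_pow]
  refine Finset.sum_congr rfl fun a _ => ?_
  rw [← RCLike.conj_mul]
  ring

theorem star_dotProduct_self_eq_sum_norm_sq (ψ : n → 𝕜) :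
    star ψ ⬝ᵥ ψ = ((∑ a, ‖ψ a‖ ^ 2 : ℝ) : 𝕜) := by
  simp only [dotProduct, Pi.star_apply, RCLike.star_def, RCLike.conj_mul, RCLike.ofReal_sum,
    RCLike.ofReal_pow]

theorem jointNumericalRange_diagonal [DecidableEq n] (χ : n → ι → ℝ) :
    jointNumericalRange (fun i => diagonal fun a => (χ a i : 𝕜)) = convexHull ℝ (range χ) := by
  rw [convexHull_range_eq_image_stdSimplex, ← image_norm_sq_eq_stdSimplex (𝕜 := 𝕜), image_image]
  ext x
  simp only [jointNumericalRange, mem_ofPred_eq, mem_image, star_dotProduct_diagonal_mulVec,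
    star_dotProduct_self_eq_sum_norm_sq, RCLike.ofReal_re]
  refine exists_congr fun ψ => and_congr (by norm_cast) ?_
  rw [eq_comm, funext_iff]
  simp [Finset.sum_apply]

theorem star_dotProduct_mul_mul_star_mulVec (U A : Matrix n n 𝕜) (ψ : n → 𝕜) :
    star ψ ⬝ᵥ ((U * A * star U) *ᵥ ψ) = star (star U *ᵥ ψ) ⬝ᵥ (A *ᵥ (star U *ᵥ ψ)) := by
  simp only [star_mulVec, dotProduct_mulVec, vecMul_vecMul, star_eq_conjTranspose,
    conjTranspose_conjTranspose]

theorem jointNumericalRange_unitary_conj [DecidableEq n] {U : Matrix n n 𝕜}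
    (hU : U ∈ unitaryGroup n 𝕜) (A : ι → Matrix n n 𝕜) :
    jointNumericalRange (fun i => U * A i * star U) = jointNumericalRange A := by
  have hnorm (ψ : n → 𝕜) : star (star U *ᵥ ψ) ⬝ᵥ (star U *ᵥ ψ) = star ψ ⬝ᵥ ψ := by
    simpa [mem_unitaryGroup_iff.mp hU] using (star_dotProduct_mul_mul_star_mulVec U 1 ψ).symm
  ext x
  constructor
  · rintro ⟨ψ, hψ, hx⟩
    exact ⟨star U *ᵥ ψ, (hnorm ψ).trans hψ, fun i => by
      rw [hx i, star_dotProduct_mul_mul_star_mulVec]⟩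
  · rintro ⟨φ, hφ, hx⟩
    have hUφ : star U *ᵥ (U *ᵥ φ) = φ := by
      rw [mulVec_mulVec, mem_unitaryGroup_iff'.mp hU, one_mulVec]
    exact ⟨U *ᵥ φ, by rw [← hnorm, hUφ, hφ], fun i => by
      rw [hx i, star_dotProduct_mul_mul_star_mulVec, hUφ]⟩

end Unitary

/-- For `d` commuting Hermitian matrices `H₁,…,H_d` of size `d+1`
(playing the role of `d−1` matrices of size `d`), the family `{H_i} ∪ {I}` is linearly
independent (over ℝ) iff the joint numerical range
`W(H₁,…,H_d) ⊂ ℝ^d` is a non-degenerate `d`-dimensional simplex, i.e. the convex hull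
of `d+1` affinely independent points. -/
theorem stmt12 (d : ℕ) (H : Fin d → Matrix (Fin (d+1)) (Fin (d+1)) ℂ)
    (hherm : ∀ i, (H i).IsHermitian)
    (hcomm : ∀ i j, Commute (H i) (H j))
    (W : Set (Fin d → ℝ))
    (hW : W = {x | ∃ ψ : Fin (d+1) → ℂ, star ψ ⬝ᵥ ψ = 1 ∧
        ∀ i, x i = (star ψ ⬝ᵥ (H i *ᵥ ψ)).re}) :
    LinearIndependent ℝ (Fin.cons (1 : Matrix (Fin (d+1)) (Fin (d+1)) ℂ) H) ↔
      ∃ v : Fin (d+1) → (Fin d → ℝ), AffineIndependent ℝ v ∧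
        W = convexHull ℝ (Set.range v) := by
  obtain ⟨U, hU, χ, hH⟩ :=
    Matrix.IsHermitian.exists_unitary_diagonal_of_pairwise_commute hherm fun i j _ => hcomm i j
  have hWχ : W = convexHull ℝ (range χ) := by
    change W = jointNumericalRange H at hW
    rw [hW, funext hH, jointNumericalRange_unitary_conj hU, jointNumericalRange_diagonal]
  have hcons : Fin.cons 1 H = fun k => U * diagonal (fun a =>
      ((Fin.cons 1 fun i a => χ a i : Fin (d + 1) → Fin (d + 1) → ℝ) k a : ℂ)) * star U := by
    ext1 k
    cases k using Fin.cases with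
    | zero => simp [mem_unitaryGroup_iff.mp hU]
    | succ i => exact hH i
  rw [hcons]
  refine (linearIndependent_unitary_conj_diagonal_iff hU _).trans <|
    (linearIndependent_finCons_one_iff_affineIndependent χ).trans ?_
  exact ⟨fun hχ => ⟨χ, hχ, hWχ⟩, fun ⟨v, hv, hWv⟩ =>
    affineIndependent_of_convexHull_range_eq (Fintype.card_fin _) (Fintype.card_fin _) hv
      (hWχ.symm.trans hWv)⟩
end

section
/- Let Φ be a channel on ℂ^d with Kraus operators K_j = H_j + iA_j. Then the supremum of the operation fidelity F(Φ,ψ) over unit vectors ψ equals the square of the joint numerical radius w(H₁,…,H_m,A₁,…,A_m), and the infimum equals the square of the Crawford number c(H₁,…,H_m,A₁,…,A_m). -/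
open Matrix Set

/-!
Writing `K_j = H_j + i A_j`, the expectation `⟨ψ|K_j|ψ⟩ = ⟨ψ|H_j|ψ⟩ + i ⟨ψ|A_j|ψ⟩` has real and
imaginary parts `⟨ψ|H_j|ψ⟩` and `⟨ψ|A_j|ψ⟩`, since Hermitian matrices have real expectations.
Hence `F(Φ, ψ) = |r⃗(ψ)|²` for the point `r⃗(ψ)` of the joint numerical range, so the set of
fidelities is the image of `{|r⃗| : r⃗ ∈ W}` under squaring, which is monotone and continuous on
`[0, ∞)` and therefore commutes with `sSup` and `sInf`.
-/

namespace Real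

lemma sSup_image_sq {T : Set ℝ} (hT : ∀ x ∈ T, 0 ≤ x) :
    sSup ((· ^ 2) '' T) = sSup T ^ 2 := by
  rcases T.eq_empty_or_nonempty with rfl | hne
  · simp
  by_cases hbdd : BddAbove T
  · exact ((pow_left_monotoneOn.mono hT).map_csSup_of_continuousWithinAt
      (continuous_pow 2).continuousWithinAt hne hbdd).symm
  have hbdd_sq : ¬ BddAbove ((· ^ 2) '' T) := by
    rintro ⟨M, hM⟩
    refine hbdd ⟨√M, fun x hx => ?_⟩
    calc x = √(x ^ 2) := (sqrt_sq (hT x hx)).symm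
      _ ≤ √M := sqrt_le_sqrt (hM (mem_image_of_mem _ hx))
  rw [sSup_of_not_bddAbove hbdd_sq, sSup_of_not_bddAbove hbdd]
  norm_num

lemma sInf_image_sq {T : Set ℝ} (hT : ∀ x ∈ T, 0 ≤ x) :
    sInf ((· ^ 2) '' T) = sInf T ^ 2 := by
  rcases T.eq_empty_or_nonempty with rfl | hne
  · simp
  exact ((pow_left_monotoneOn.mono hT).map_csInf_of_continuousWithinAt
    (continuous_pow 2).continuousWithinAt hne ⟨0, hT⟩).symm

end Real

namespace Matrix

variable {n ι : Type*} [Fintype n] [Fintype ι]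

noncomputable def jointExpectation (M : ι → Matrix n n ℂ) (ψ : n → ℂ) :
    EuclideanSpace ℝ ι :=
  WithLp.toLp 2 fun t => (star ψ ⬝ᵥ (M t *ᵥ ψ)).re

lemma norm_sq_jointExpectation (M : ι → Matrix n n ℂ) (ψ : n → ℂ) :
    ‖jointExpectation M ψ‖ ^ 2 = ∑ t, (star ψ ⬝ᵥ (M t *ᵥ ψ)).re ^ 2 := by
  simp [EuclideanSpace.norm_sq_eq, jointExpectation]

lemma norm_sq_star_dotProduct_add_I_smul_mulVec {H A : Matrix n n ℂ}
    (hH : H.IsHermitian) (hA : A.IsHermitian) (ψ : n → ℂ) :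
    ‖star ψ ⬝ᵥ ((H + Complex.I • A) *ᵥ ψ)‖ ^ 2 =
      (star ψ ⬝ᵥ (H *ᵥ ψ)).re ^ 2 + (star ψ ⬝ᵥ (A *ᵥ ψ)).re ^ 2 := by
  have hH_im : (star ψ ⬝ᵥ (H *ᵥ ψ)).im = 0 := hH.im_star_dotProduct_mulVec_self ψ
  have hA_im : (star ψ ⬝ᵥ (A *ᵥ ψ)).im = 0 := hA.im_star_dotProduct_mulVec_self ψ
  rw [add_mulVec, smul_mulVec, dotProduct_add, dotProduct_smul, smul_eq_mul, Complex.sq_norm,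
    Complex.normSq_apply]
  simp only [Complex.add_re, Complex.add_im, Complex.mul_re, Complex.mul_im, Complex.I_re,
    Complex.I_im, hH_im, hA_im]
  ring

lemma sum_norm_sq_star_dotProduct_add_I_smul_mulVec {H A : ι → Matrix n n ℂ}
    (hH : ∀ j, (H j).IsHermitian) (hA : ∀ j, (A j).IsHermitian) (ψ : n → ℂ) :
    ∑ j, ‖star ψ ⬝ᵥ ((H j + Complex.I • A j) *ᵥ ψ)‖ ^ 2 =
      ‖jointExpectation (Sum.elim H A) ψ‖ ^ 2 := by
  simp only [norm_sq_jointExpectation, Fintype.sum_sum_type, Sum.elim_inl, Sum.elim_inr,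
    norm_sq_star_dotProduct_add_I_smul_mulVec (hH _) (hA _), Finset.sum_add_distrib]

end Matrix

/-- For a channel with Kraus operators `K_j = H_j + i A_j` (with `H_j, A_j`
Hermitian), the supremum of the operation fidelity over unit vectors equals the square of
the joint numerical radius `w(H₁,…,H_m,A₁,…,A_m)`, and the infimum equals the square of
the Crawford number `c(H₁,…,H_m,A₁,…,A_m)`. -/
theorem stmt19 (d m : ℕ) (K H A : Fin m → Matrix (Fin d) (Fin d) ℂ)
    (hH : ∀ j, (H j).IsHermitian) (hA : ∀ j, (A j).IsHermitian)
    (hK : ∀ j, K j = H j + Complex.I • A j)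
    (W : Set (EuclideanSpace ℝ (Fin m ⊕ Fin m)))
    (hW : W = {r | ∃ ψ : Fin d → ℂ, star ψ ⬝ᵥ ψ = 1 ∧
        ∀ t, r t = (star ψ ⬝ᵥ ((Sum.elim H A t) *ᵥ ψ)).re}) :
    sSup {x : ℝ | ∃ ψ : Fin d → ℂ, star ψ ⬝ᵥ ψ = 1 ∧
        x = ∑ j, ‖star ψ ⬝ᵥ (K j *ᵥ ψ)‖ ^ 2} =
      (sSup ((fun r : EuclideanSpace ℝ (Fin m ⊕ Fin m) => ‖r‖) '' W)) ^ 2 ∧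
    sInf {x : ℝ | ∃ ψ : Fin d → ℂ, star ψ ⬝ᵥ ψ = 1 ∧
        x = ∑ j, ‖star ψ ⬝ᵥ (K j *ᵥ ψ)‖ ^ 2} =
      (sInf ((fun r : EuclideanSpace ℝ (Fin m ⊕ Fin m) => ‖r‖) '' W)) ^ 2 := by
  obtain rfl : K = fun j => H j + Complex.I • A j := funext hK
  have hW_image : W = jointExpectation (Sum.elim H A) '' {ψ | star ψ ⬝ᵥ ψ = 1} := by
    subst hW
    ext r
    constructor
    · rintro ⟨ψ, hψ, hr⟩
      exact ⟨ψ, hψ, PiLp.ext fun t => (hr t).symm⟩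
    · rintro ⟨ψ, hψ, rfl⟩
      exact ⟨ψ, hψ, fun t => rfl⟩
  have hfidelity : {x : ℝ | ∃ ψ : Fin d → ℂ, star ψ ⬝ᵥ ψ = 1 ∧
      x = ∑ j, ‖star ψ ⬝ᵥ ((H j + Complex.I • A j) *ᵥ ψ)‖ ^ 2} = (· ^ 2) '' ((‖·‖) '' W) := by
    rw [hW_image, image_image, image_image]
    ext x
    simp only [mem_ofPred_eq, mem_image, sum_norm_sq_star_dotProduct_add_I_smul_mulVec hH hA,
      eq_comm]
  have hnonneg : ∀ x ∈ (‖·‖) '' W, 0 ≤ x := by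
    rintro _ ⟨r, -, rfl⟩
    exact norm_nonneg r
  rw [hfidelity]
  exact ⟨Real.sSup_image_sq hnonneg, Real.sInf_image_sq hnonneg⟩
end
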